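/- For concept classes C1 ⊆ {0,1}^{n1} and C2 ⊆ {0,1}^{n2}, the recursive teaching dimension of the Cartesian product satisfies RTD(C1 × C2) ≤ RTD(C1) + RTD(C2). -/

import Mathlib

open Finset

def IsTeachingSet {n : ℕ} (C : Finset (Fin n → Bool)) (c : Fin n → Bool)
    (A : Finset (Fin n)) : Prop :=
  ∀ c' ∈ C, c' ≠ c → ∃ i ∈ A, c' i ≠ c i

noncomputable def TD {n : ℕ} (C : Finset (Fin n → Bool)) (c : Fin n → Bool) : ℕ :=
  sInf {k | ∃ A : Finset (Fin n), A.card = k ∧ IsTeachingSet C c A}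

noncomputable def TDmin {n : ℕ} (C : Finset (Fin n → Bool)) : ℕ :=
  sInf {k | ∃ c ∈ C, TD C c = k}

noncomputable def patterns {n : ℕ} (C : Finset (Fin n → Bool)) (A : Finset (Fin n)) :
    Finset (A → Bool) :=
  @Finset.image _ _ (Classical.decEq _) (fun c (i : A) => c i.1) C

def IsXYClass {n : ℕ} (C : Finset (Fin n → Bool)) (a b : ℕ) : Prop :=
  ∀ A : Finset (Fin n), A.card ≤ a → (patterns C A).card ≤ b

def Shatters {n : ℕ} (C : Finset (Fin n → Bool)) (A : Finset (Fin n)) : Prop :=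
  ∀ f : A → Bool, ∃ c ∈ C, ∀ i : A, c i.1 = f i

noncomputable def VCD {n : ℕ} (C : Finset (Fin n → Bool)) : ℕ :=
  sSup {k | ∃ A : Finset (Fin n), A.card = k ∧ Shatters C A}

noncomputable def eraseMin {n : ℕ} (C : Finset (Fin n → Bool)) : Finset (Fin n → Bool) :=
  @Finset.filter _ (fun c => TD C c ≠ TDmin C) (Classical.decPred _) C

noncomputable def RTD {n : ℕ} (C : Finset (Fin n → Bool)) : ℕ :=
  sSup (Set.range fun t => TDmin (eraseMin^[t] C))

noncomputable def fDim (a b : ℕ) : ℕ∞ :=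
  sSup {m : ℕ∞ | ∃ (n : ℕ) (C : Finset (Fin n → Bool)),
    C.Nonempty ∧ IsXYClass C a b ∧ (TDmin C : ℕ∞) = m}

noncomputable def consistClass {n : ℕ} (C : Finset (Fin n → Bool)) (Y : Finset (Fin n))
    (b : Fin n → Bool) : Finset (Fin n → Bool) :=
  @Finset.filter _ (fun c => ∀ i ∈ Y, c i = b i) (Classical.decPred _) C

noncomputable def prodClass {n1 n2 : ℕ} (C1 : Finset (Fin n1 → Bool))
    (C2 : Finset (Fin n2 → Bool)) : Finset (Fin (n1 + n2) → Bool) :=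
  @Finset.filter _
    (fun c => (fun i => c (Fin.castAdd n2 i)) ∈ C1 ∧ (fun j => c (Fin.natAdd n1 j)) ∈ C2)
    (Classical.decPred _) Finset.univ

/-!
If `D` is any nonempty subclass of `C1 × C2`, pick `c1` of minimal teaching dimension in the
projection `D1` of `D` to the first block, then `c2` of minimal teaching dimension in the fibre
`D2` of `D` over `c1`, projected to the second block. A teaching set for `c1` in `D1` together with
one for `c2` in `D2` teaches the concatenation `c1 c2` in `D`, so
`TDmin D ≤ TDmin D1 + TDmin D2`. Every stage of the recursive teaching plan of `C1 × C2` is such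
a `D`, and the minimal teaching dimension of any nonempty subclass of `C` is at most `RTD C`,
because its first element to be removed by the plan of `C` had teaching dimension `TDmin` at that
stage.
-/

section TeachingDimension

variable {n : ℕ}

lemma isTeachingSet_univ (C : Finset (Fin n → Bool)) (c : Fin n → Bool) :
    IsTeachingSet C c univ := fun _ _ hne => by
  by_contra! h
  exact hne (funext fun i => h i (mem_univ i))

lemma exists_isTeachingSet_card_eq_TD (C : Finset (Fin n → Bool)) (c : Fin n → Bool) :
    ∃ A : Finset (Fin n), A.card = TD C c ∧ IsTeachingSet C c A :=
  Nat.sInf_mem (⟨_, univ, rfl, isTeachingSet_univ C c⟩ :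
    {k | ∃ A : Finset (Fin n), A.card = k ∧ IsTeachingSet C c A}.Nonempty)

lemma IsTeachingSet.TD_le_card {C : Finset (Fin n → Bool)} {c : Fin n → Bool}
    {A : Finset (Fin n)} (h : IsTeachingSet C c A) : TD C c ≤ A.card :=
  Nat.sInf_le ⟨A, rfl, h⟩

lemma TD_le (C : Finset (Fin n → Bool)) (c : Fin n → Bool) : TD C c ≤ n := by
  simpa using (isTeachingSet_univ C c).TD_le_card

lemma TD_mono {C D : Finset (Fin n → Bool)} (h : D ⊆ C) (c : Fin n → Bool) :
    TD D c ≤ TD C c := by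
  obtain ⟨A, hA, hTS⟩ := exists_isTeachingSet_card_eq_TD C c
  exact hA ▸ IsTeachingSet.TD_le_card fun c' hc' => hTS c' (h hc')

lemma exists_TD_eq_TDmin {C : Finset (Fin n → Bool)} (h : C.Nonempty) :
    ∃ c ∈ C, TD C c = TDmin C :=
  have ⟨c, hc⟩ := h
  Nat.sInf_mem (⟨_, c, hc, rfl⟩ : {k | ∃ c ∈ C, TD C c = k}.Nonempty)

lemma TDmin_le_TD {C : Finset (Fin n → Bool)} {c : Fin n → Bool} (hc : c ∈ C) :
    TDmin C ≤ TD C c :=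
  Nat.sInf_le ⟨c, hc, rfl⟩

@[simp]
lemma TDmin_empty : TDmin (∅ : Finset (Fin n → Bool)) = 0 := by
  simp [TDmin]

lemma TDmin_le (C : Finset (Fin n → Bool)) : TDmin C ≤ n := by
  obtain rfl | ⟨c, hc⟩ := C.eq_empty_or_nonempty
  · simp
  · exact (TDmin_le_TD hc).trans (TD_le C c)

end TeachingDimension

section RecursiveTeaching

variable {n : ℕ}

lemma mem_eraseMin {C : Finset (Fin n → Bool)} {c : Fin n → Bool} :
    c ∈ eraseMin C ↔ c ∈ C ∧ TD C c ≠ TDmin C :=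
  @mem_filter _ _ (Classical.decPred _) _ _

lemma eraseMin_subset (C : Finset (Fin n → Bool)) : eraseMin C ⊆ C :=
  fun _ hc => (mem_eraseMin.mp hc).1

lemma iterate_eraseMin_subset (C : Finset (Fin n → Bool)) (t : ℕ) : eraseMin^[t] C ⊆ C := by
  induction t with
  | zero => rfl
  | succ t ih => exact (Function.iterate_succ_apply' eraseMin t C ▸ eraseMin_subset _).trans ih

lemma card_eraseMin_lt {C : Finset (Fin n → Bool)} (h : C.Nonempty) :
    (eraseMin C).card < C.card := by
  obtain ⟨c, hc, hTD⟩ := exists_TD_eq_TDmin h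
  exact card_lt_card ⟨eraseMin_subset C, fun hsub => (mem_eraseMin.mp (hsub hc)).2 hTD⟩

lemma TDmin_le_RTD (C : Finset (Fin n → Bool)) (t : ℕ) : TDmin (eraseMin^[t] C) ≤ RTD C :=
  le_csSup ⟨n, fun _ ⟨_, ht⟩ => ht ▸ TDmin_le _⟩ ⟨t, rfl⟩

lemma TDmin_le_RTD_of_subset_iterate {C D : Finset (Fin n → Bool)} (hD : D.Nonempty)
    (t : ℕ) (hsub : D ⊆ eraseMin^[t] C) : TDmin D ≤ RTD C := by
  by_cases hnext : D ⊆ eraseMin^[t + 1] C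
  · exact TDmin_le_RTD_of_subset_iterate hD (t + 1) hnext
  obtain ⟨c, hcD, hc_erased⟩ := not_subset.mp hnext
  rw [Function.iterate_succ_apply', mem_eraseMin, not_and_not_right] at hc_erased
  calc TDmin D ≤ TD D c := TDmin_le_TD hcD
    _ ≤ TD (eraseMin^[t] C) c := TD_mono hsub c
    _ = TDmin (eraseMin^[t] C) := hc_erased (hsub hcD)
    _ ≤ RTD C := TDmin_le_RTD C t
termination_by (eraseMin^[t] C).card
decreasing_by
  rw [Function.iterate_succ_apply']
  exact card_eraseMin_lt (hD.mono hsub)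

lemma TDmin_le_RTD_of_subset {C D : Finset (Fin n → Bool)} (hsub : D ⊆ C) (hD : D.Nonempty) :
    TDmin D ≤ RTD C :=
  TDmin_le_RTD_of_subset_iterate hD 0 hsub

end RecursiveTeaching

section Product

variable {n1 n2 : ℕ}

def leftPart (c : Fin (n1 + n2) → Bool) : Fin n1 → Bool := fun i => c (Fin.castAdd n2 i)

def rightPart (c : Fin (n1 + n2) → Bool) : Fin n2 → Bool := fun j => c (Fin.natAdd n1 j)

lemma eq_of_leftPart_eq_of_rightPart_eq {c c' : Fin (n1 + n2) → Bool}
    (h1 : leftPart c' = leftPart c) (h2 : rightPart c' = rightPart c) : c' = c :=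
  funext fun k => Fin.addCases (fun i => congrFun h1 i) (fun j => congrFun h2 j) k

lemma mem_prodClass {C1 : Finset (Fin n1 → Bool)} {C2 : Finset (Fin n2 → Bool)}
    {c : Fin (n1 + n2) → Bool} : c ∈ prodClass C1 C2 ↔ leftPart c ∈ C1 ∧ rightPart c ∈ C2 := by
  rw [prodClass, @mem_filter _ _ (Classical.decPred _)]
  exact and_iff_right (mem_univ c)

variable [DecidableEq (Fin n1 → Bool)]

def fiberClass (D : Finset (Fin (n1 + n2) → Bool)) (c1 : Fin n1 → Bool) :
    Finset (Fin n2 → Bool) :=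
  (D.filter (leftPart · = c1)).image rightPart

lemma TD_le_TD_image_leftPart_add_TD_fiberClass (D : Finset (Fin (n1 + n2) → Bool))
    (c : Fin (n1 + n2) → Bool) :
    TD D c ≤ TD (D.image leftPart) (leftPart c) + TD (fiberClass D (leftPart c)) (rightPart c) := by
  obtain ⟨A1, hA1, hTS1⟩ := exists_isTeachingSet_card_eq_TD (D.image leftPart) (leftPart c)
  obtain ⟨A2, hA2, hTS2⟩ :=
    exists_isTeachingSet_card_eq_TD (fiberClass D (leftPart c)) (rightPart c)
  have hTS : IsTeachingSet D c (A1.map (Fin.castAddEmb n2) ∪ A2.map (Fin.natAddEmb n1)) := by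
    intro c' hc' hne
    by_cases hleft : leftPart c' = leftPart c
    · have hright : rightPart c' ≠ rightPart c :=
        fun h => hne (eq_of_leftPart_eq_of_rightPart_eq hleft h)
      obtain ⟨j, hj, hdiff⟩ :=
        hTS2 _ (mem_image_of_mem _ (mem_filter.mpr ⟨hc', hleft⟩)) hright
      exact ⟨_, mem_union_right _ (mem_map_of_mem _ hj), hdiff⟩
    · obtain ⟨i, hi, hdiff⟩ := hTS1 _ (mem_image_of_mem _ hc') hleft
      exact ⟨_, mem_union_left _ (mem_map_of_mem _ hi), hdiff⟩
  calc TD D c ≤ _ := hTS.TD_le_card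
    _ ≤ A1.card + A2.card := (card_union_le _ _).trans_eq (by rw [card_map, card_map])
    _ = _ := by rw [hA1, hA2]

lemma TDmin_le_RTD_add_RTD_of_subset_prodClass {C1 : Finset (Fin n1 → Bool)}
    {C2 : Finset (Fin n2 → Bool)} {D : Finset (Fin (n1 + n2) → Bool)}
    (hsub : D ⊆ prodClass C1 C2) (hD : D.Nonempty) : TDmin D ≤ RTD C1 + RTD C2 := by
  have hD1 : D.image leftPart ⊆ C1 := by
    simpa [image_subset_iff] using fun c hc => (mem_prodClass.mp (hsub hc)).1
  obtain ⟨c1, hc1, hc1_min⟩ := exists_TD_eq_TDmin (hD.image leftPart)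
  have hD2 : fiberClass D c1 ⊆ C2 := by
    simpa [fiberClass, image_subset_iff] using fun c hc _ => (mem_prodClass.mp (hsub hc)).2
  obtain ⟨c', hc'D, rfl⟩ := mem_image.mp hc1
  have hD2ne : (fiberClass D (leftPart c')).Nonempty :=
    ⟨_, mem_image_of_mem _ (mem_filter.mpr ⟨hc'D, rfl⟩)⟩
  obtain ⟨c2, hc2, hc2_min⟩ := exists_TD_eq_TDmin hD2ne
  obtain ⟨c, hc, rfl⟩ := mem_image.mp hc2
  obtain ⟨hcD, hleft⟩ := mem_filter.mp hc
  calc TDmin D ≤ TD D c := TDmin_le_TD hcD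
    _ ≤ _ := TD_le_TD_image_leftPart_add_TD_fiberClass D c
    _ = TDmin (D.image leftPart) + TDmin (fiberClass D (leftPart c')) := by
        rw [hleft, hc1_min, hc2_min]
    _ ≤ RTD C1 + RTD C2 :=
        add_le_add (TDmin_le_RTD_of_subset hD1 (hD.image _)) (TDmin_le_RTD_of_subset hD2 hD2ne)

end Product

theorem stmt17 (n1 n2 : ℕ) (C1 : Finset (Fin n1 → Bool)) (C2 : Finset (Fin n2 → Bool)) :
    RTD (prodClass C1 C2) ≤ RTD C1 + RTD C2 := by
  classical
  refine csSup_le (Set.range_nonempty _) ?_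
  rintro _ ⟨t, rfl⟩
  obtain hempty | hne := (eraseMin^[t] (prodClass C1 C2)).eq_empty_or_nonempty
  · simp [hempty]
  · exact TDmin_le_RTD_add_RTD_of_subset_prodClass (iterate_eraseMin_subset _ t) hne
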